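/- arXiv:2201.10197 — 2 statements merged into one kernel-verified Lean document; each statement's English description precedes it below -/
import Mathlib

section
/- Let $A, B$ be real matrices with $A \in \mathbb{R}^{n\times n}$, $B \in \mathbb{R}^{n\times m}$, and let $\hat{A}, \hat{B}$ satisfy $\|A - \hat{A}\| \le \varepsilon$ and $\|B - \hat{B}\| \le \varepsilon$ for some $\varepsilon \ge 0$. Let $\ell \ge 1$ and define the controllability matrices $\mathcal{C}_\ell = [B\; AB\; \cdots\; A^{\ell-1}B]$ and $\hat{\mathcal{C}}_\ell = [\hat{B}\; \hat{A}\hat{B}\; \cdots\; \hat{A}^{\ell-1}\hat{B}]$. If $\sigma_n(\mathcal{C}_\ell) \ge \nu$ for some $\nu > 0$, then $\sigma_n(\hat{\mathcal{C}}_\ell) \ge \nu - \varepsilon \ell^{3/2} \beta^{\ell-1}(\|B\| + 1)$, where $\beta = \max\{1, \varepsilon + \|A\|\}$. -/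
open scoped Matrix.Norms.L2Operator
open Matrix

/-- The `n`-th largest singular value of a matrix with `n` rows:
the square root of the smallest eigenvalue of `M * Mᴴ`. -/
noncomputable def sigmaN {n : ℕ} {p : Type*} [Fintype p] (M : Matrix (Fin n) p ℝ) : ℝ :=
  Real.sqrt (⨅ i : Fin n, (Matrix.isHermitian_mul_conjTranspose_self M).eigenvalues i)

/-- The controllability matrix `[B  AB  ⋯  A^(ℓ-1)B]` (horizontal concatenation). -/
noncomputable def ctrbMat {n m : ℕ} (A : Matrix (Fin n) (Fin n) ℝ)
    (B : Matrix (Fin n) (Fin m) ℝ) (ℓ : ℕ) : Matrix (Fin n) (Fin ℓ × Fin m) ℝ :=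
  Matrix.of fun i jr => (A ^ (jr.1 : ℕ) * B) i jr.2

/-!
Weyl's perturbation inequality for the smallest singular value,
`σₙ(M) ≤ σₙ(N) + ‖M - N‖` (test the Rayleigh quotient of `M Mᴴ` on a bottom eigenvector
of `N Nᴴ`), reduces the theorem to bounding `‖𝒞_ℓ - 𝒞̂_ℓ‖`.
The `k`-th column block of that difference is `A^k B - Â^k B̂`, of norm at most
`ε β^(ℓ-1) ℓ (‖B‖ + 1)` by telescoping `A^k - Â^k`, and a matrix whose `ℓ` column blocks
have norm at most `K` has norm at most `√ℓ K`, since `D Dᴴ` is the sum of the `Dₖ Dₖᴴ`.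
-/

theorem CStarRing.norm_pow_le {E : Type*} [NormedRing E] [StarRing E] [CStarRing E]
    (a : E) (k : ℕ) : ‖a ^ k‖ ≤ ‖a‖ ^ k := by
  cases subsingleton_or_nontrivial E
  · simp [Subsingleton.elim (a ^ k) 0]
  · exact _root_.norm_pow_le a k

theorem norm_pow_sub_pow_le {R : Type*} [NormedRing R] {a b : R} {β : ℝ}
    (ha : ‖a‖ ≤ β) (hb : ‖b‖ ≤ β) (k : ℕ) :
    ‖a ^ k - b ^ k‖ ≤ k * β ^ (k - 1) * ‖a - b‖ := by
  rcases Nat.eq_zero_or_pos k with rfl | hk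
  · simp
  induction k, hk using Nat.le_induction with
  | base => simp
  | succ k hk ih =>
    have hsplit : a ^ (k + 1) - b ^ (k + 1) = a * (a ^ k - b ^ k) + (a - b) * b ^ k := by
      rw [mul_sub, sub_mul, pow_succ', pow_succ']
      abel
    calc ‖a ^ (k + 1) - b ^ (k + 1)‖
        ≤ ‖a‖ * ‖a ^ k - b ^ k‖ + ‖a - b‖ * ‖b ^ k‖ := by
          rw [hsplit]
          exact (norm_add_le _ _).trans (add_le_add (norm_mul_le _ _) (norm_mul_le _ _))
      _ ≤ β * (k * β ^ (k - 1) * ‖a - b‖) + ‖a - b‖ * β ^ k := by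
          have hβ : 0 ≤ β := (norm_nonneg a).trans ha
          gcongr
          exact (norm_pow_le' b hk).trans (pow_le_pow_left₀ (norm_nonneg b) hb k)
      _ = (k + 1 : ℕ) * β ^ (k + 1 - 1) * ‖a - b‖ := by
          rw [Nat.add_sub_cancel, ← mul_pow_sub_one (by omega : k ≠ 0) β]
          push_cast
          ring

theorem EuclideanSpace.norm_equiv_symm_sq {p : Type*} [Fintype p] (v : p → ℝ) :
    ‖(EuclideanSpace.equiv p ℝ).symm v‖ ^ 2 = v ⬝ᵥ v := by
  rw [← real_inner_self_eq_norm_sq]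
  rfl

namespace Matrix

section Rayleigh

variable {n p : Type*} [Fintype n] [Fintype p]

theorem IsHermitian.iInf_eigenvalues_mul_dotProduct_self_le [DecidableEq n] {H : Matrix n n ℝ}
    (hH : H.IsHermitian) (x : n → ℝ) :
    (⨅ i, hH.eigenvalues i) * (x ⬝ᵥ x) ≤ x ⬝ᵥ (H *ᵥ x) := by
  set b := hH.eigenvectorBasis
  have parseval (y : n → ℝ) : x ⬝ᵥ y = ∑ i, (⇑(b i) ⬝ᵥ x) * (⇑(b i) ⬝ᵥ y) := by
    have := b.sum_inner_mul_inner ((EuclideanSpace.equiv n ℝ).symm x)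
      ((EuclideanSpace.equiv n ℝ).symm y)
    simp only [EuclideanSpace.inner_eq_star_dotProduct, star_trivial] at this
    simpa [dotProduct_comm] using this.symm
  have coord (i : n) : ⇑(b i) ⬝ᵥ (H *ᵥ x) = hH.eigenvalues i * (⇑(b i) ⬝ᵥ x) := by
    rw [dotProduct_mulVec, ← mulVec_transpose, ← conjTranspose_eq_transpose_of_trivial, hH,
      hH.mulVec_eigenvectorBasis, smul_dotProduct, smul_eq_mul]
  rw [parseval, parseval, Finset.mul_sum]
  refine Finset.sum_le_sum fun i _ => ?_
  calc (⨅ i, hH.eigenvalues i) * ((⇑(b i) ⬝ᵥ x) * (⇑(b i) ⬝ᵥ x))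
      ≤ hH.eigenvalues i * ((⇑(b i) ⬝ᵥ x) * (⇑(b i) ⬝ᵥ x)) :=
        mul_le_mul_of_nonneg_right (ciInf_le (Set.finite_range _).bddBelow i) (mul_self_nonneg _)
    _ = (⇑(b i) ⬝ᵥ x) * (⇑(b i) ⬝ᵥ (H *ᵥ x)) := by rw [coord]; ring

theorem dotProduct_mul_conjTranspose_mulVec (M : Matrix n p ℝ) (x : n → ℝ) :
    x ⬝ᵥ ((M * Mᴴ) *ᵥ x) = (Mᴴ *ᵥ x) ⬝ᵥ (Mᴴ *ᵥ x) := by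
  rw [← mulVec_mulVec, dotProduct_mulVec, conjTranspose_eq_transpose_of_trivial,
    mulVec_transpose]

end Rayleigh

section L2OpNorm

variable {𝕜 : Type*} [RCLike 𝕜] {m n p ι : Type*} [Fintype m] [Fintype n] [Fintype p]
  [Fintype ι] [DecidableEq m] [DecidableEq n] [DecidableEq p] [DecidableEq ι]

theorem l2_opNorm_mul_conjTranspose_self (A : Matrix m p 𝕜) : ‖A * Aᴴ‖ = ‖A‖ * ‖A‖ := by
  simpa [l2_opNorm_conjTranspose] using l2_opNorm_conjTranspose_mul_self Aᴴ

theorem l2_opNorm_le_sqrt_card_mul_of_blocks (D : Matrix m (ι × p) 𝕜) {K : ℝ}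
    (hK : 0 ≤ K) (hD : ∀ k, ‖D.submatrix id (Prod.mk k)‖ ≤ K) :
    ‖D‖ ≤ √(Fintype.card ι) * K := by
  have hsum : D * Dᴴ = ∑ k, D.submatrix id (Prod.mk k) * (D.submatrix id (Prod.mk k))ᴴ := by
    ext i j
    simp [mul_apply, Fintype.sum_prod_type, Matrix.sum_apply]
  have hsq : ‖D‖ ^ 2 ≤ Fintype.card ι * K ^ 2 := calc
    ‖D‖ ^ 2 = ‖D * Dᴴ‖ := by rw [l2_opNorm_mul_conjTranspose_self, sq]
    _ ≤ ∑ k, ‖D.submatrix id (Prod.mk k)‖ ^ 2 := by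
      rw [hsum]
      refine (norm_sum_le _ _).trans_eq ?_
      simp only [l2_opNorm_mul_conjTranspose_self, sq]
    _ ≤ ∑ _k : ι, K ^ 2 := by gcongr with k; exact hD k
    _ = Fintype.card ι * K ^ 2 := by simp
  rw [← Real.sqrt_sq hK, ← Real.sqrt_mul (Nat.cast_nonneg _)]
  exact Real.le_sqrt_of_sq_le hsq

theorem norm_pow_mul_sub_pow_mul_le {A Ahat : Matrix n n 𝕜} {B Bhat : Matrix n p 𝕜} {β ε : ℝ}
    (hβ : 1 ≤ β) (hA : ‖A‖ ≤ β) (hAhat : ‖Ahat‖ ≤ β) (hAd : ‖A - Ahat‖ ≤ ε)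
    (hBd : ‖B - Bhat‖ ≤ ε)
    {k ℓ : ℕ} (hk : k < ℓ) :
    ‖A ^ k * B - Ahat ^ k * Bhat‖ ≤ ε * ℓ * β ^ (ℓ - 1) * (‖B‖ + 1) := by
  have hε : 0 ≤ ε := (norm_nonneg _).trans hBd
  have hkℓ : (k : ℝ) ≤ ℓ := by exact_mod_cast hk.le
  have hℓ : (1 : ℝ) ≤ ℓ := by exact_mod_cast (show 1 ≤ ℓ by omega)
  have hpow₁ : β ^ (k - 1) ≤ β ^ (ℓ - 1) := pow_le_pow_right₀ hβ (by omega)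
  have hpow₂ : β ^ k ≤ β ^ (ℓ - 1) := pow_le_pow_right₀ hβ (by omega)
  calc ‖A ^ k * B - Ahat ^ k * Bhat‖ = ‖(A ^ k - Ahat ^ k) * B + Ahat ^ k * (B - Bhat)‖ := by
        rw [Matrix.sub_mul, Matrix.mul_sub, sub_add_sub_cancel]
    _ ≤ ‖A ^ k - Ahat ^ k‖ * ‖B‖ + ‖Ahat ^ k‖ * ‖B - Bhat‖ :=
        norm_add_le_of_le (l2_opNorm_mul _ _) (l2_opNorm_mul _ _)
    _ ≤ (k * β ^ (k - 1) * ε) * ‖B‖ + β ^ k * ε := by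
        gcongr
        · exact (norm_pow_sub_pow_le hA hAhat k).trans (by gcongr)
        · exact (CStarRing.norm_pow_le Ahat k).trans (pow_le_pow_left₀ (norm_nonneg _) hAhat k)
    _ ≤ (ℓ * β ^ (ℓ - 1) * ε) * ‖B‖ + β ^ (ℓ - 1) * ε := by gcongr
    _ ≤ (ℓ * β ^ (ℓ - 1) * ε) * ‖B‖ + ℓ * (β ^ (ℓ - 1) * ε) := by
        linarith [le_mul_of_one_le_left (by positivity : 0 ≤ β ^ (ℓ - 1) * ε) hℓ]
    _ = ε * ℓ * β ^ (ℓ - 1) * (‖B‖ + 1) := by ring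

end L2OpNorm

end Matrix

section SmallestSingularValue

variable {n : ℕ} {p : Type*} [Fintype p]

theorem sigmaN_mul_norm_le (M : Matrix (Fin n) p ℝ) (x : EuclideanSpace ℝ (Fin n)) :
    sigmaN M * ‖x‖ ≤ ‖(EuclideanSpace.equiv p ℝ).symm (Mᴴ *ᵥ x)‖ := by
  rw [sigmaN, ← Real.sqrt_sq (norm_nonneg x), ← Real.sqrt_mul' _ (sq_nonneg _),
    ← Real.sqrt_sq (norm_nonneg (_ : EuclideanSpace ℝ p)), EuclideanSpace.norm_equiv_symm_sq,
    ← dotProduct_mul_conjTranspose_mulVec]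
  refine Real.sqrt_le_sqrt ?_
  simpa [← EuclideanSpace.norm_equiv_symm_sq] using
    (isHermitian_mul_conjTranspose_self M).iInf_eigenvalues_mul_dotProduct_self_le x

theorem exists_norm_eq_one_and_norm_conjTranspose_mulVec_eq_sigmaN [Nonempty (Fin n)]
    (M : Matrix (Fin n) p ℝ) :
    ∃ x : EuclideanSpace ℝ (Fin n), ‖x‖ = 1 ∧
      ‖(EuclideanSpace.equiv p ℝ).symm (Mᴴ *ᵥ x)‖ = sigmaN M := by
  set hH := isHermitian_mul_conjTranspose_self M
  obtain ⟨i, hi⟩ := exists_eq_ciInf_of_finite (f := hH.eigenvalues)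
  have hx := hH.eigenvectorBasis.norm_eq_one i
  refine ⟨hH.eigenvectorBasis i, hx, ?_⟩
  rw [sigmaN, ← hi, ← Real.sqrt_sq (norm_nonneg (_ : EuclideanSpace ℝ p)),
    EuclideanSpace.norm_equiv_symm_sq, ← dotProduct_mul_conjTranspose_mulVec,
    hH.mulVec_eigenvectorBasis, dotProduct_smul, ← EuclideanSpace.norm_equiv_symm_sq]
  change √(_ • ‖hH.eigenvectorBasis i‖ ^ 2) = _
  rw [hx, one_pow, smul_eq_mul, mul_one]

theorem sigmaN_le_sigmaN_add_norm_sub [DecidableEq p] (M N : Matrix (Fin n) p ℝ) :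
    sigmaN M ≤ sigmaN N + ‖M - N‖ := by
  rcases isEmpty_or_nonempty (Fin n) with hn | hn
  · rw [sigmaN, Real.iInf_of_isEmpty, Real.sqrt_zero]
    exact add_nonneg (Real.sqrt_nonneg _) (norm_nonneg _)
  obtain ⟨x, hx, hNx⟩ := exists_norm_eq_one_and_norm_conjTranspose_mulVec_eq_sigmaN N
  calc sigmaN M ≤ ‖(EuclideanSpace.equiv p ℝ).symm (Mᴴ *ᵥ x)‖ := by
        simpa [hx] using sigmaN_mul_norm_le M x
    _ = ‖(EuclideanSpace.equiv p ℝ).symm (Nᴴ *ᵥ x)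
          + (EuclideanSpace.equiv p ℝ).symm ((M - N)ᴴ *ᵥ x)‖ := by
        rw [← map_add, ← add_mulVec, ← conjTranspose_add, add_sub_cancel]
    _ ≤ sigmaN N + ‖(M - N)ᴴ‖ * ‖x‖ :=
        hNx ▸ norm_add_le_of_le le_rfl (l2_opNorm_mulVec _ _)
    _ = sigmaN N + ‖M - N‖ := by rw [hx, mul_one, l2_opNorm_conjTranspose]

end SmallestSingularValue

theorem ctrbMat_sub_ctrbMat_submatrix {n m : ℕ} (A Ahat : Matrix (Fin n) (Fin n) ℝ)
    (B Bhat : Matrix (Fin n) (Fin m) ℝ) (ℓ : ℕ) (k : Fin ℓ) :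
    (ctrbMat A B ℓ - ctrbMat Ahat Bhat ℓ).submatrix id (Prod.mk k)
      = A ^ (k : ℕ) * B - Ahat ^ (k : ℕ) * Bhat :=
  rfl

theorem norm_ctrbMat_sub_ctrbMat_le {n m : ℕ} {A Ahat : Matrix (Fin n) (Fin n) ℝ}
    {B Bhat : Matrix (Fin n) (Fin m) ℝ} {ε : ℝ} (hA : ‖A - Ahat‖ ≤ ε) (hB : ‖B - Bhat‖ ≤ ε)
    (ℓ : ℕ) :
    ‖ctrbMat A B ℓ - ctrbMat Ahat Bhat ℓ‖
      ≤ ε * (ℓ : ℝ) ^ ((3 : ℝ) / 2) * (max 1 (ε + ‖A‖)) ^ (ℓ - 1) * (‖B‖ + 1) := by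
  set β := max 1 (ε + ‖A‖)
  have hε : 0 ≤ ε := (norm_nonneg _).trans hA
  have hAβ : ‖A‖ ≤ β := le_max_of_le_right (le_add_of_nonneg_left hε)
  have hAhatβ : ‖Ahat‖ ≤ β := by
    have := norm_le_norm_add_norm_sub' Ahat A
    rw [norm_sub_rev] at this
    exact le_max_of_le_right (by linarith)
  have h32 : (ℓ : ℝ) ^ ((3 : ℝ) / 2) = ℓ * √ℓ := by
    rw [show (3 : ℝ) / 2 = 1 + 1 / 2 by norm_num, Real.rpow_add' (Nat.cast_nonneg ℓ) (by norm_num),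
      Real.rpow_one, Real.sqrt_eq_rpow]
  calc ‖ctrbMat A B ℓ - ctrbMat Ahat Bhat ℓ‖
      ≤ √(Fintype.card (Fin ℓ)) * (ε * ℓ * β ^ (ℓ - 1) * (‖B‖ + 1)) :=
        l2_opNorm_le_sqrt_card_mul_of_blocks _ (by positivity) fun k => by
          rw [ctrbMat_sub_ctrbMat_submatrix]
          exact norm_pow_mul_sub_pow_mul_le (le_max_left _ _) hAβ hAhatβ hA hB k.2
    _ = ε * (ℓ : ℝ) ^ ((3 : ℝ) / 2) * β ^ (ℓ - 1) * (‖B‖ + 1) := by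
        rw [Fintype.card_fin, h32]
        ring

theorem stmt3_general {n m : ℕ} (A Ahat : Matrix (Fin n) (Fin n) ℝ)
    (B Bhat : Matrix (Fin n) (Fin m) ℝ) (ε ν : ℝ) (ℓ : ℕ)
    (hA : ‖A - Ahat‖ ≤ ε) (hB : ‖B - Bhat‖ ≤ ε)
    (hC : ν ≤ sigmaN (ctrbMat A B ℓ)) :
    ν - ε * (ℓ : ℝ) ^ ((3 : ℝ) / 2) * (max 1 (ε + ‖A‖)) ^ (ℓ - 1) * (‖B‖ + 1)
      ≤ sigmaN (ctrbMat Ahat Bhat ℓ) := by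
  have hweyl := sigmaN_le_sigmaN_add_norm_sub (ctrbMat A B ℓ) (ctrbMat Ahat Bhat ℓ)
  have hpert := norm_ctrbMat_sub_ctrbMat_le hA hB ℓ
  linarith

theorem stmt3 {n m : ℕ} (A Ahat : Matrix (Fin n) (Fin n) ℝ)
    (B Bhat : Matrix (Fin n) (Fin m) ℝ) (ε ν : ℝ) (ℓ : ℕ)
    (hε : 0 ≤ ε) (hA : ‖A - Ahat‖ ≤ ε) (hB : ‖B - Bhat‖ ≤ ε)
    (hℓ : 1 ≤ ℓ) (hν : 0 < ν) (hC : ν ≤ sigmaN (ctrbMat A B ℓ)) :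
    ν - ε * (ℓ : ℝ) ^ ((3 : ℝ) / 2) * (max 1 (ε + ‖A‖)) ^ (ℓ - 1) * (‖B‖ + 1)
      ≤ sigmaN (ctrbMat Ahat Bhat ℓ) :=
  stmt3_general A Ahat B Bhat ε ν ℓ hA hB hC
end

section
/- Let $\{K_k\}_{k=0}^{N-1}$ and $\{\hat{K}_k\}_{k=0}^{N-1}$ be sequences of $m \times n$ real matrices with $\|K_k - \hat{K}_k\| \le \varepsilon$ for all $k$, and let $A \in \mathbb{R}^{n\times n}$, $B \in \mathbb{R}^{n\times m}$. Define $\Psi_{k_2,k_1} = (A + BK_{k_2-1})(A+BK_{k_2-2})\cdots(A+BK_{k_1})$ and $\hat{\Psi}_{k_2,k_1} = (A + B\hat{K}_{k_2-1})\cdots(A+B\hat{K}_{k_1})$ for $0 \le k_1 \le k_2 \le N$ (empty products equal to the identity). Suppose there are $\zeta \ge 1$ and $0 < \eta < 1$ with $\|\Psi_{k_2,k_1}\| \le \zeta\eta^{k_2-k_1}$ for all $0 \le k_1 \le k_2 \le N$. If $\varepsilon \le \frac{1-\eta}{2\|B\|\zeta}$, then $\|\hat{\Psi}_{k_2,k_1}\|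 \le \zeta\big(\frac{1+\eta}{2}\big)^{k_2-k_1}$ for all $0 \le k_1 \le k_2 \le N$. -/
open scoped Matrix.Norms.L2Operator
open Matrix

/-!
Write `Â_k = A_k + Δ_k` with `A_k = A + B K_k` and `Δ_k = B (K̂_k - K_k)`. Expanding the perturbed
product one factor at a time gives the variation-of-constants formula
`Ψ̂(k₂,k₁) = Ψ(k₂,k₁) + ∑_{k₁ ≤ j < k₂} Ψ(k₂,j+1) Δ_j Ψ̂(j,k₁)`.
Bounding `Ψ̂(j,k₁)` by strong induction, with `‖Δ_j‖ ≤ δ` and `ζ δ ≤ μ - η`, the sum is at most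
`ζ ∑ η^(d-1-i) (μ - η) μ^i = ζ (μ^d - η^d)` for `d = k₂ - k₁`, so `‖Ψ̂(k₂,k₁)‖ ≤ ζ μ^d`.
For the theorem, `δ = ‖B‖ ε` and `μ = (1 + η) / 2`.
-/

/-- The transition product `(A + B K_{k₂-1}) ⋯ (A + B K_{k₁})`
(highest index on the left; empty product is the identity). -/
noncomputable def transProd {n m : ℕ} (A : Matrix (Fin n) (Fin n) ℝ)
    (B : Matrix (Fin n) (Fin m) ℝ) (K : ℕ → Matrix (Fin m) (Fin n) ℝ)
    (k₁ k₂ : ℕ) : Matrix (Fin n) (Fin n) ℝ :=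
  ((List.range (k₂ - k₁)).map (fun i => A + B * K (k₂ - 1 - i))).prod

section StateTransition

variable {R : Type*}

/-- `stateTransition F k₁ k₂ = F (k₂ - 1) * ⋯ * F k₁`. -/
def stateTransition [Monoid R] (F : ℕ → R) (k₁ k₂ : ℕ) : R :=
  ((List.range (k₂ - k₁)).map (fun i => F (k₂ - 1 - i))).prod

@[simp]
lemma stateTransition_self [Monoid R] (F : ℕ → R) (k : ℕ) : stateTransition F k k = 1 := by
  simp [stateTransition]

lemma stateTransition_succ [Monoid R] (F : ℕ → R) {k₁ k₂ : ℕ} (h : k₁ ≤ k₂) :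
    stateTransition F k₁ (k₂ + 1) = F k₂ * stateTransition F k₁ k₂ := by
  rw [stateTransition, Nat.succ_sub h, List.range_succ_eq_map, List.map_cons, List.prod_cons,
    List.map_map, stateTransition]
  congr 3
  funext i
  simp only [Function.comp, Nat.add_sub_cancel, Nat.sub_sub, Nat.add_comm 1 i]

lemma stateTransition_add [Ring R] (F G : ℕ → R) {k₁ k₂ : ℕ} (h : k₁ ≤ k₂) :
    stateTransition (F + G) k₁ k₂ = stateTransition F k₁ k₂ +
      ∑ i ∈ Finset.range (k₂ - k₁),
        stateTransition F (k₁ + i + 1) k₂ * G (k₁ + i) * stateTransition (F + G) k₁ (k₁ + i) := by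
  induction k₂, h using Nat.le_induction with
  | base => simp
  | succ k₂ h ih =>
    have hd : k₂ + 1 - k₁ = k₂ - k₁ + 1 := by omega
    have hk : k₁ + (k₂ - k₁) = k₂ := by omega
    have hterm : ∀ i ∈ Finset.range (k₂ - k₁),
        F k₂ * (stateTransition F (k₁ + i + 1) k₂ * G (k₁ + i) *
          stateTransition (F + G) k₁ (k₁ + i)) =
        stateTransition F (k₁ + i + 1) (k₂ + 1) * G (k₁ + i) *
          stateTransition (F + G) k₁ (k₁ + i) := by
      intro i hi
      rw [Finset.mem_range] at hi
      rw [stateTransition_succ F (by omega), mul_assoc, mul_assoc, mul_assoc]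
    rw [stateTransition_succ _ h, stateTransition_succ F h, hd, Finset.sum_range_succ, hk,
      Pi.add_apply, add_mul, ih, mul_add, Finset.mul_sum, Finset.sum_congr rfl hterm,
      stateTransition_self, one_mul]
    abel

theorem norm_stateTransition_add_le [NormedRing R] {F G : ℕ → R} {N : ℕ} {ζ η μ δ : ℝ}
    (hF : ∀ k₁ k₂, k₁ ≤ k₂ → k₂ ≤ N → ‖stateTransition F k₁ k₂‖ ≤ ζ * η ^ (k₂ - k₁))
    (hG : ∀ k < N, ‖G k‖ ≤ δ) (hη : 0 ≤ η) (hμ : ζ * δ + η ≤ μ) :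
    ∀ k₁ k₂, k₁ ≤ k₂ → k₂ ≤ N → ‖stateTransition (F + G) k₁ k₂‖ ≤ ζ * μ ^ (k₂ - k₁) := by
  intro k₁ k₂
  induction k₂ using Nat.strong_induction_on with
  | _ k₂ ih =>
  intro h12 h2N
  obtain rfl | hlt := h12.eq_or_lt
  · simpa using hF k₁ k₁ le_rfl h2N
  have hζ : 0 ≤ ζ := by simpa using (norm_nonneg _).trans (hF k₁ k₁ le_rfl (h12.trans h2N))
  have hδ : 0 ≤ δ := (norm_nonneg _).trans (hG k₁ (hlt.trans_le h2N))
  have hμ0 : 0 ≤ μ := (add_nonneg (mul_nonneg hζ hδ) hη).trans hμ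
  set d := k₂ - k₁
  have hterm : ∀ i ∈ Finset.range d,
      ‖stateTransition F (k₁ + i + 1) k₂ * G (k₁ + i) * stateTransition (F + G) k₁ (k₁ + i)‖ ≤
        ζ * (μ - η) * (μ ^ i * η ^ (d - 1 - i)) := by
    intro i hi
    rw [Finset.mem_range] at hi
    have hX := hF (k₁ + i + 1) k₂ (by omega) h2N
    have hY := ih (k₁ + i) (by omega) (by omega) (by omega)
    rw [show k₂ - (k₁ + i + 1) = d - 1 - i by omega] at hX
    rw [Nat.add_sub_cancel_left] at hY
    calc _ ≤ ‖stateTransition F (k₁ + i + 1) k₂‖ * ‖G (k₁ + i)‖ *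
          ‖stateTransition (F + G) k₁ (k₁ + i)‖ := norm_mul₃_le
      _ ≤ ζ * η ^ (d - 1 - i) * δ * (ζ * μ ^ i) := by gcongr; exact hG _ (by omega)
      _ = ζ * (ζ * δ) * (μ ^ i * η ^ (d - 1 - i)) := by ring
      _ ≤ ζ * (μ - η) * (μ ^ i * η ^ (d - 1 - i)) := by gcongr; linarith
  calc ‖stateTransition (F + G) k₁ k₂‖
      = ‖stateTransition F k₁ k₂ + ∑ i ∈ Finset.range d,
          stateTransition F (k₁ + i + 1) k₂ * G (k₁ + i) *
            stateTransition (F + G) k₁ (k₁ + i)‖ := by rw [stateTransition_add F G h12]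
    _ ≤ ζ * η ^ d + ∑ i ∈ Finset.range d, ζ * (μ - η) * (μ ^ i * η ^ (d - 1 - i)) :=
      norm_add_le_of_le (hF k₁ k₂ h12 h2N) ((norm_sum_le _ _).trans (Finset.sum_le_sum hterm))
    _ = ζ * μ ^ d := by rw [← Finset.mul_sum, mul_assoc, mul_comm (μ - η), geom_sum₂_mul]; ring

end StateTransition

lemma transProd_eq_stateTransition {n m : ℕ} (A : Matrix (Fin n) (Fin n) ℝ)
    (B : Matrix (Fin n) (Fin m) ℝ) (K : ℕ → Matrix (Fin m) (Fin n) ℝ) :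
    transProd A B K = stateTransition (fun k => A + B * K k) :=
  rfl

theorem stmt6_general {n m N : ℕ} (A : Matrix (Fin n) (Fin n) ℝ)
    (B : Matrix (Fin n) (Fin m) ℝ) (K Khat : ℕ → Matrix (Fin m) (Fin n) ℝ)
    (ε ζ η : ℝ)
    (hK : ∀ k < N, ‖K k - Khat k‖ ≤ ε)
    (hη0 : 0 < η) (hη1 : η < 1)
    (hΨ : ∀ k₁ k₂ : ℕ, k₁ ≤ k₂ → k₂ ≤ N →
      ‖transProd A B K k₁ k₂‖ ≤ ζ * η ^ (k₂ - k₁))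
    (hε : ε ≤ (1 - η) / (2 * ‖B‖ * ζ)) :
    ∀ k₁ k₂ : ℕ, k₁ ≤ k₂ → k₂ ≤ N →
      ‖transProd A B Khat k₁ k₂‖ ≤ ζ * ((1 + η) / 2) ^ (k₂ - k₁) := by
  have hζ : 0 ≤ ζ := by simpa using (norm_nonneg _).trans (hΨ 0 0 le_rfl N.zero_le)
  have hμ : ζ * (‖B‖ * ε) + η ≤ (1 + η) / 2 := by
    rcases (mul_nonneg (mul_nonneg zero_le_two (norm_nonneg B)) hζ).eq_or_lt with h0 | hpos
    · have : ζ * (‖B‖ * ε) = 2 * ‖B‖ * ζ * ε / 2 := by ring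
      rw [this, ← h0]
      linarith
    · have := (le_div_iff₀ hpos).mp hε
      linarith
  have hG : ∀ k < N, ‖B * (Khat k - K k)‖ ≤ ‖B‖ * ε := fun k hk =>
    (l2_opNorm_mul _ _).trans (by rw [norm_sub_rev]; gcongr; exact hK k hk)
  have hsum : (fun k => A + B * K k) + (fun k => B * (Khat k - K k)) =
      fun k => A + B * Khat k := by
    funext k
    rw [Pi.add_apply, Matrix.mul_sub]
    abel
  simp only [transProd_eq_stateTransition] at hΨ ⊢
  rw [← hsum]
  exact norm_stateTransition_add_le hΨ hG hη0.le hμ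

theorem stmt6 {n m N : ℕ} (A : Matrix (Fin n) (Fin n) ℝ)
    (B : Matrix (Fin n) (Fin m) ℝ) (K Khat : ℕ → Matrix (Fin m) (Fin n) ℝ)
    (ε ζ η : ℝ)
    (hK : ∀ k < N, ‖K k - Khat k‖ ≤ ε)
    (hζ : 1 ≤ ζ) (hη0 : 0 < η) (hη1 : η < 1)
    (hΨ : ∀ k₁ k₂ : ℕ, k₁ ≤ k₂ → k₂ ≤ N →
      ‖transProd A B K k₁ k₂‖ ≤ ζ * η ^ (k₂ - k₁))
    (hε : ε ≤ (1 - η) / (2 * ‖B‖ * ζ)) :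
    ∀ k₁ k₂ : ℕ, k₁ ≤ k₂ → k₂ ≤ N →
      ‖transProd A B Khat k₁ k₂‖ ≤ ζ * ((1 + η) / 2) ^ (k₂ - k₁) :=
  stmt6_general A B K Khat ε ζ η hK hη0 hη1 hΨ hε
end
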